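/- The classifier obtained by AIR trained sequentially on data split into k phases equals the classifier obtained by joint training on the union of all phases' data: iteratively accumulating A^(y) and C^(y) phase by phase and then forming W̄ = (Σ_y π_y A^(y) + γI)⁻¹(Σ_y π_y C^(y)) yields exactly the minimizer of the weighted loss over all data simultaneously. -/

import Mathlib

open Matrix

/-- Squared Frobenius norm of a real matrix. -/
def frobSq {m n : Type*} [Fintype m] [Fintype n] (M : Matrix m n ℝ) : ℝ :=
  ∑ i, ∑ j, (M i j) ^ 2

namespace AIRaux

variable {p q r : Type*} [Fintype p] [Fintype q] [Fintype r]

noncomputable def ip (M N : Matrix p q ℝ) : ℝ := Matrix.trace (Mᵀ * N)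

lemma ip_comm (M N : Matrix p q ℝ) : ip M N = ip N M := by
  rw [ip, ip, ← Matrix.trace_transpose, Matrix.transpose_mul, Matrix.transpose_transpose]

lemma frobSq_eq_ip (M : Matrix p q ℝ) : frobSq M = ip M M := by
  simp only [frobSq, ip, Matrix.trace, Matrix.diag, Matrix.mul_apply,
    Matrix.transpose_apply, sq]
  exact Finset.sum_comm


lemma frobSq_add (M N : Matrix p q ℝ) :
    frobSq (M + N) = frobSq M + 2 * ip M N + frobSq N := by
  simp only [frobSq_eq_ip, ip, transpose_add, Matrix.add_mul, Matrix.mul_add, trace_add]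
  have h : trace (Nᵀ * M) = trace (Mᵀ * N) := ip_comm N M
  linarith

lemma ip_transpose_mul (Xm : Matrix p q ℝ) (M : Matrix p r ℝ) (D : Matrix q r ℝ) :
    ip M (Xm * D) = ip (Xmᵀ * M) D := by
  rw [ip, ip, transpose_mul, transpose_transpose, Matrix.mul_assoc]

lemma ip_add_left (M N P : Matrix p q ℝ) : ip (M + N) P = ip M P + ip N P := by
  rw [ip, ip, ip, transpose_add, Matrix.add_mul, trace_add]

lemma ip_smul_left (c : ℝ) (M P : Matrix p q ℝ) : ip (c • M) P = c * ip M P := by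
  rw [ip, ip, transpose_smul, Matrix.smul_mul, trace_smul, smul_eq_mul]

lemma ip_sum_left {ι : Type*} (s : Finset ι) (M : ι → Matrix p q ℝ) (P : Matrix p q ℝ) :
    ip (∑ y ∈ s, M y) P = ∑ y ∈ s, ip (M y) P := by
  rw [ip, transpose_sum, Matrix.sum_mul, trace_sum]
  rfl

lemma ip_zero_left (P : Matrix p q ℝ) : ip (0 : Matrix p q ℝ) P = 0 := by
  simp [ip]

lemma frobSq_nonneg (M : Matrix p q ℝ) : 0 ≤ frobSq M :=
  Finset.sum_nonneg fun i _ => Finset.sum_nonneg fun j _ => sq_nonneg _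

lemma frobSq_eq_zero {M : Matrix p q ℝ} (h : frobSq M = 0) : M = 0 := by
  ext i j
  have h1 := (Finset.sum_eq_zero_iff_of_nonneg
    (fun i _ => Finset.sum_nonneg fun j _ => sq_nonneg (M i j))).mp h i (Finset.mem_univ i)
  have h2 := (Finset.sum_eq_zero_iff_of_nonneg
    (fun j _ => sq_nonneg (M i j))).mp h1 j (Finset.mem_univ j)
  simpa using pow_eq_zero_iff (n := 2) (by norm_num) |>.mp h2

lemma posSemidef_smul {M : Matrix p p ℝ} (hM : M.PosSemidef) {c : ℝ} (hc : 0 ≤ c) :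
    (c • M).PosSemidef := by
  refine ⟨?_, fun x => ?_⟩
  · unfold Matrix.IsHermitian
    rw [conjTranspose_smul, hM.1]
    simp
  · exact (hM.smul hc).2 x

lemma posSemidef_transpose_mul_self (M : Matrix p q ℝ) : (Mᵀ * M).PosSemidef := by
  have := Matrix.posSemidef_conjTranspose_mul_self M
  rwa [Matrix.conjTranspose_eq_transpose_of_trivial] at this

end AIRaux

set_option maxHeartbeats 1000000
open AIRaux

/-- The classifier obtained by AIR trained sequentially on data split into `k` phases equals
the classifier obtained by joint training: iteratively accumulating `A^(y)` and `C^(y)`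
phase by phase and forming `W̄ = (Σ_y π_y A^(y) + γI)⁻¹(Σ_y π_y C^(y))` yields exactly the
minimizer of the weighted loss over all data simultaneously. -/
theorem AIR_sequential_eq_joint (k m f C : ℕ) (N : Fin k → Fin m → ℕ)
    (X : (t : Fin k) → (y : Fin m) → Matrix (Fin (N t y)) (Fin f) ℝ)
    (Y : (t : Fin k) → (y : Fin m) → Matrix (Fin (N t y)) (Fin C) ℝ)
    (π : Fin m → ℝ) (hπ : ∀ y, 0 < π y) (γ : ℝ) (hγ : 0 < γ)
    -- per-class data of class `y` across all phases, concatenated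
    (Xc : (y : Fin m) → Matrix ((t : Fin k) × Fin (N t y)) (Fin f) ℝ)
    (Yc : (y : Fin m) → Matrix ((t : Fin k) × Fin (N t y)) (Fin C) ℝ)
    (hXc : ∀ y p j, Xc y p j = X p.1 y p.2 j)
    (hYc : ∀ y p j, Yc y p j = Y p.1 y p.2 j)
    -- accumulated auto- and cross-correlation matrices (running sums phase by phase)
    (A : Fin m → Matrix (Fin f) (Fin f) ℝ)
    (Cm : Fin m → Matrix (Fin f) (Fin C) ℝ)
    (hA : ∀ y, A y = ∑ t, (X t y)ᵀ * X t y)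
    (hC : ∀ y, Cm y = ∑ t, (X t y)ᵀ * Y t y)
    -- the AIR classifier
    (Wbar : Matrix (Fin f) (Fin C) ℝ)
    (hWbar : Wbar = (∑ y, π y • A y + γ • (1 : Matrix (Fin f) (Fin f) ℝ))⁻¹ *
        (∑ y, π y • Cm y))
    -- the joint weighted loss over all data
    (L : Matrix (Fin f) (Fin C) ℝ → ℝ)
    (hL : ∀ W, L W = (∑ y, π y * frobSq (Xc y * W - Yc y)) + γ * frobSq W) :
    (∀ W, L Wbar ≤ L W) ∧ (∀ W, L W = L Wbar → W = Wbar) := by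
  -- relate concatenated data to accumulated correlation matrices
  have hAX : ∀ y, (Xc y)ᵀ * Xc y = A y := by
    intro y
    rw [hA]
    ext i j
    simp only [Matrix.mul_apply, Matrix.transpose_apply, Matrix.sum_apply, hXc]
    rw [← Finset.univ_sigma_univ, Finset.sum_sigma]
  have hCX : ∀ y, (Xc y)ᵀ * Yc y = Cm y := by
    intro y
    rw [hC]
    ext i j
    simp only [Matrix.mul_apply, Matrix.transpose_apply, Matrix.sum_apply, hXc, hYc]
    rw [← Finset.univ_sigma_univ, Finset.sum_sigma]
  set S : Matrix (Fin f) (Fin f) ℝ :=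
    ∑ y, π y • A y + γ • (1 : Matrix (Fin f) (Fin f) ℝ) with hSdef
  -- S is positive definite, hence invertible
  have hSpd : S.PosDef := by
    apply Matrix.PosDef.posSemidef_add
    · apply Finset.sum_induction _ _ (fun a b ha hb => ha.add hb) Matrix.PosSemidef.zero
      intro y _
      exact posSemidef_smul (hAX y ▸ posSemidef_transpose_mul_self (Xc y)) (hπ y).le
    · rw [Matrix.smul_one_eq_diagonal]
      exact Matrix.posDef_diagonal_iff.mpr fun _ => hγ
  have hSunit : IsUnit S.det := hSpd.det_pos.ne'.isUnit
  have hSW : S * Wbar = ∑ y, π y • Cm y := by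
    rw [hWbar, ← Matrix.mul_assoc, Matrix.mul_nonsing_inv _ hSunit, Matrix.one_mul]
  -- the normal equations
  have hZ : ∑ y, π y • ((Xc y)ᵀ * (Xc y * Wbar - Yc y)) + γ • Wbar = 0 := by
    have e : ∀ y, (Xc y)ᵀ * (Xc y * Wbar - Yc y) = A y * Wbar - Cm y := by
      intro y
      rw [Matrix.mul_sub, ← Matrix.mul_assoc, hAX, hCX]
    simp_rw [e, smul_sub]
    rw [Finset.sum_sub_distrib]
    have e2 : ∑ y, π y • (A y * Wbar) = (∑ y, π y • A y) * Wbar := by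
      rw [Matrix.sum_mul]
      simp_rw [Matrix.smul_mul]
    have e3 : γ • Wbar = (γ • (1 : Matrix (Fin f) (Fin f) ℝ)) * Wbar := by
      rw [Matrix.smul_mul, Matrix.one_mul]
    rw [e2, e3, sub_add_eq_add_sub, ← Matrix.add_mul, ← hSdef, hSW, sub_self]
  -- key decomposition of the loss
  have key : ∀ W, L W = L Wbar +
      ((∑ y, π y * frobSq (Xc y * (W - Wbar))) + γ * frobSq (W - Wbar)) := by
    intro W
    set D := W - Wbar with hD
    have hWdec : W = Wbar + D := by rw [hD]; abel
    have h2 : ∀ y, frobSq (Xc y * W - Yc y) = frobSq (Xc y * Wbar - Yc y) +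
        2 * ip (Xc y * Wbar - Yc y) (Xc y * D) + frobSq (Xc y * D) := by
      intro y
      have h1 : Xc y * W - Yc y = (Xc y * Wbar - Yc y) + Xc y * D := by
        rw [hD, Matrix.mul_sub]; abel
      rw [h1, frobSq_add]
    have h3 : frobSq W = frobSq Wbar + 2 * ip Wbar D + frobSq D := by
      conv_lhs => rw [hWdec]
      rw [frobSq_add]
    have hcross : (∑ y, π y * ip (Xc y * Wbar - Yc y) (Xc y * D)) + γ * ip Wbar D = 0 := by
      simp_rw [ip_transpose_mul]
      calc (∑ y, π y * ip ((Xc y)ᵀ * (Xc y * Wbar - Yc y)) D) + γ * ip Wbar D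
          = ip (∑ y, π y • ((Xc y)ᵀ * (Xc y * Wbar - Yc y)) + γ • Wbar) D := by
            rw [ip_add_left, ip_sum_left, ip_smul_left]
            simp_rw [ip_smul_left]
        _ = 0 := by rw [hZ, ip_zero_left]
    rw [hL, hL]
    simp_rw [h2, h3, mul_add, Finset.sum_add_distrib]
    have hc2 : ∑ x, π x * (2 * ip (Xc x * Wbar - Yc x) (Xc x * D)) =
        2 * ∑ x, π x * ip (Xc x * Wbar - Yc x) (Xc x * D) := by
      rw [Finset.mul_sum]
      exact Finset.sum_congr rfl fun x _ => by ring
    linarith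
  constructor
  · intro W
    rw [key W]
    have h1 : 0 ≤ ∑ y, π y * frobSq (Xc y * (W - Wbar)) :=
      Finset.sum_nonneg fun y _ => mul_nonneg (hπ y).le (frobSq_nonneg _)
    have h2 : 0 ≤ γ * frobSq (W - Wbar) := mul_nonneg hγ.le (frobSq_nonneg _)
    linarith
  · intro W hW
    rw [key W] at hW
    have h1 : 0 ≤ ∑ y, π y * frobSq (Xc y * (W - Wbar)) :=
      Finset.sum_nonneg fun y _ => mul_nonneg (hπ y).le (frobSq_nonneg _)
    have h2 : γ * frobSq (W - Wbar) = 0 := by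
      have := frobSq_nonneg (W - Wbar)
      nlinarith
    have h3 : frobSq (W - Wbar) = 0 := by
      rcases mul_eq_zero.mp h2 with h | h
      · exact absurd h hγ.ne'
      · exact h
    have := frobSq_eq_zero h3
    rw [sub_eq_zero] at this
    exact this
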